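/- Let Σ be a connected (X,2)-arc-transitive graph of valency 4 with X acting faithfully on V(Σ), and let Δ be a self-paired X-orbit on Arc₃(Σ) with ℓ₁(Δ) = 3. Then ℷ(Σ,Δ) has valency 6, Ξ(Σ,Δ) has valency 9, both ℷ(Σ,Δ) and Ξ(Σ,Δ) are connected and (X,1)-transitive (X-symmetric but not (X,2)-arc-transitive), and Σ is (X,3)-arc-transitive. -/

import Mathlib

open Pointwise

/-- A 2-arc `(t.1, t.2.1, t.2.2)` of a simple graph. -/
def IsArc2 {V : Type*} (G : SimpleGraph V) (t : V × V × V) : Prop :=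
  G.Adj t.1 t.2.1 ∧ G.Adj t.2.1 t.2.2 ∧ t.1 ≠ t.2.2

/-- A 3-arc `(t.1, t.2.1, t.2.2.1, t.2.2.2)` of a simple graph. -/
def IsArc3 {V : Type*} (G : SimpleGraph V) (t : V × V × V × V) : Prop :=
  G.Adj t.1 t.2.1 ∧ G.Adj t.2.1 t.2.2.1 ∧ G.Adj t.2.2.1 t.2.2.2 ∧
    t.1 ≠ t.2.2.1 ∧ t.2.1 ≠ t.2.2.2

/-- The reverse of a 3-arc. -/
def rev3 {V : Type*} (t : V × V × V × V) : V × V × V × V :=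
  (t.2.2.2, t.2.2.1, t.2.1, t.1)

/-- `G` is regular of valency `d`. -/
def Regular {V : Type*} (G : SimpleGraph V) (d : ℕ) : Prop :=
  ∀ u : V, (G.neighborSet u).ncard = d

/-- The action of `X` preserves the adjacency of `G`. -/
def AdjPres (X : Type*) {V : Type*} [Group X] [MulAction X V] (G : SimpleGraph V) : Prop :=
  ∀ (x : X) (u w : V), G.Adj u w → G.Adj (x • u) (x • w)

/-- `X` is transitive on the vertices. -/
def VertexTrans (X V : Type*) [Group X] [MulAction X V] : Prop :=
  ∀ u w : V, ∃ x : X, x • u = w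

/-- `X` is transitive on the arcs of `G`. -/
def ArcTrans (X : Type*) {V : Type*} [Group X] [MulAction X V] (G : SimpleGraph V) : Prop :=
  ∀ a b : V × V, G.Adj a.1 a.2 → G.Adj b.1 b.2 → ∃ x : X, x • a = b

/-- `G` is `X`-symmetric. -/
def XSymm (X : Type*) {V : Type*} [Group X] [MulAction X V] (G : SimpleGraph V) : Prop :=
  AdjPres X G ∧ VertexTrans X V ∧ ArcTrans X G

/-- `X` is transitive on the 2-arcs of `G`. -/
def Arc2Trans (X : Type*) {V : Type*} [Group X] [MulAction X V] (G : SimpleGraph V) : Prop :=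
  ∀ s t : V × V × V, IsArc2 G s → IsArc2 G t → ∃ x : X, x • s = t

/-- `X` is transitive on the 3-arcs of `G`. -/
def Arc3Trans (X : Type*) {V : Type*} [Group X] [MulAction X V] (G : SimpleGraph V) : Prop :=
  ∀ s t : V × V × V × V, IsArc3 G s → IsArc3 G t → ∃ x : X, x • s = t

/-- `G` is `(X,2)`-arc-transitive. -/
def Arc2TransGraph (X : Type*) {V : Type*} [Group X] [MulAction X V] (G : SimpleGraph V) : Prop :=
  XSymm X G ∧ Arc2Trans X G

/-- `X` is regular on the 2-arcs of `G`, i.e. `G` is `(X,2)`-arc-regular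
(together with `X`-symmetry). -/
def Arc2Reg (X : Type*) {V : Type*} [Group X] [MulAction X V] (G : SimpleGraph V) : Prop :=
  XSymm X G ∧ ∀ s t : V × V × V, IsArc2 G s → IsArc2 G t → ∃! x : X, x • s = t

/-- `Δ` is a self-paired `X`-orbit on the set of 3-arcs of `G`. -/
def SelfPairedOrbit3 (X : Type*) {V : Type*} [Group X] [MulAction X V] (G : SimpleGraph V)
    (Δ : Set (V × V × V × V)) : Prop :=
  (∀ t ∈ Δ, IsArc3 G t) ∧ (∃ t₀ ∈ Δ, Δ = MulAction.orbit X t₀) ∧ ∀ t ∈ Δ, rev3 t ∈ Δ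

/-- `ℓ₁(Δ) = k`:  for each `(τ₁,τ,σ,σ₁) ∈ Δ`, the orbit of `σ₁` under the pointwise
stabilizer of `(τ₁,τ,σ)` in `X` has exactly `k` elements. -/
def Ell1Eq (X : Type*) {V : Type*} [Group X] [MulAction X V]
    (Δ : Set (V × V × V × V)) (k : ℕ) : Prop :=
  ∀ t ∈ Δ, ({u : V | ∃ x : X, x • t.1 = t.1 ∧ x • t.2.1 = t.2.1 ∧
    x • t.2.2.1 = t.2.2.1 ∧ x • t.2.2.2 = u}).ncard = k

/-- A 2-path of `G`, as an ordered triple with distinct vertices. -/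
def Path2 {V : Type*} (G : SimpleGraph V) : Type _ :=
  {p : V × V × V // G.Adj p.1 p.2.1 ∧ G.Adj p.2.1 p.2.2 ∧ p.1 ≠ p.2.2}

/-- The reverse of a 2-path. -/
def p2rev {V : Type*} (G : SimpleGraph V) (p : Path2 G) : Path2 G :=
  ⟨(p.1.2.2, p.1.2.1, p.1.1), p.2.2.1.symm, p.2.1.symm, p.2.2.2.symm⟩

/-- 2-paths of `G` up to reversal. -/
def P2 {V : Type*} (G : SimpleGraph V) : Type _ :=
  Quot (fun p q : Path2 G => q = p2rev G p)

/-- The 2-path (mod reversal) determined by an ordered 2-path. -/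
def P2.mk {V : Type*} (G : SimpleGraph V) (p : Path2 G) : P2 G := Quot.mk _ p

/-- The graph `ℷ(G,Δ)` on the 2-paths of `G`:  `[α₀,α₁,α₂]` is adjacent to
`[α₁,α₂,α₃]` whenever `(α₀,α₁,α₂,α₃) ∈ Δ`. -/
def gimel {V : Type*} (G : SimpleGraph V) (Δ : Set (V × V × V × V)) : SimpleGraph (P2 G) :=
  SimpleGraph.fromRel (fun z w => ∃ p q : Path2 G,
    z = P2.mk G p ∧ w = P2.mk G q ∧ p.1.2.1 = q.1.1 ∧ p.1.2.2 = q.1.2.1 ∧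
    (p.1.1, p.1.2.1, p.1.2.2, q.1.2.2) ∈ Δ)

/-- The block `P_τ` of all 2-paths of `G` with middle vertex `τ`. -/
def PBlock {V : Type*} (G : SimpleGraph V) (τ : V) : Set (P2 G) :=
  {z | ∃ p : Path2 G, z = P2.mk G p ∧ p.1.2.1 = τ}

/-- `x ∈ X` maps the 2-path `z` to the 2-path `w` (under the induced action of `X`
on 2-paths mod reversal). -/
def P2Maps (X : Type*) {V : Type*} [Group X] [MulAction X V] (G : SimpleGraph V)
    (x : X) (z w : P2 G) : Prop :=
  ∃ p q : Path2 G, z = P2.mk G p ∧ w = P2.mk G q ∧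
    (q.1 = x • p.1 ∨ q.1 = x • (p2rev G p).1)

/-- For a graph `H` whose vertices carry an induced `X`-action described by a relation
`M x z w` (“`x` maps `z` to `w`”), `H` is `X`-symmetric:  `X` preserves adjacency and is
transitive on vertices and on arcs. -/
def RelXSymm (X : Type*) {W : Type*} [Group X] (M : X → W → W → Prop)
    (H : SimpleGraph W) : Prop :=
  (∀ (x : X) (z w z' w' : W), H.Adj z w → M x z z' → M x w w' → H.Adj z' w') ∧
  (∀ z w : W, ∃ x : X, M x z w) ∧
  (∀ z₁ z₂ w₁ w₂ : W, H.Adj z₁ z₂ → H.Adj w₁ w₂ → ∃ x : X, M x z₁ w₁ ∧ M x z₂ w₂)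

/-- `X` is transitive on the 2-arcs of `H`, the action being described by `M`. -/
def RelArc2Trans (X : Type*) {W : Type*} [Group X] (M : X → W → W → Prop)
    (H : SimpleGraph W) : Prop :=
  ∀ z₁ z₂ z₃ w₁ w₂ w₃ : W, H.Adj z₁ z₂ → H.Adj z₂ z₃ → z₁ ≠ z₃ →
    H.Adj w₁ w₂ → H.Adj w₂ w₃ → w₁ ≠ w₃ →
    ∃ x : X, M x z₁ w₁ ∧ M x z₂ w₂ ∧ M x z₃ w₃

/-- `X` is regular on the arcs of `H`, the action being described by `M`. -/
def RelArc1Reg (X : Type*) {W : Type*} [Group X] (M : X → W → W → Prop)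
    (H : SimpleGraph W) : Prop :=
  ∀ z₁ z₂ w₁ w₂ : W, H.Adj z₁ z₂ → H.Adj w₁ w₂ →
    ∃! x : X, M x z₁ w₁ ∧ M x z₂ w₂

/-- `X` is regular on the 2-arcs of `H`, the action being described by `M`. -/
def RelArc2Reg (X : Type*) {W : Type*} [Group X] (M : X → W → W → Prop)
    (H : SimpleGraph W) : Prop :=
  ∀ z₁ z₂ z₃ w₁ w₂ w₃ : W, H.Adj z₁ z₂ → H.Adj z₂ z₃ → z₁ ≠ z₃ →
    H.Adj w₁ w₂ → H.Adj w₂ w₃ → w₁ ≠ w₃ →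
    ∃! x : X, M x z₁ w₁ ∧ M x z₂ w₂ ∧ M x z₃ w₃

/-- The arcs of `G`, as a type. -/
def ArcT {V : Type*} (G : SimpleGraph V) : Type _ := {a : V × V // G.Adj a.1 a.2}

/-- The 3-arc graph `Ξ(G,Δ)`:  vertices are the arcs of `G`, and `(τ,τ₁)` is adjacent to
`(σ,σ₁)` iff `(τ₁,τ,σ,σ₁) ∈ Δ`. -/
def Xi {V : Type*} (G : SimpleGraph V) (Δ : Set (V × V × V × V)) : SimpleGraph (ArcT G) :=
  SimpleGraph.fromRel (fun a b => (a.1.2, a.1.1, b.1.1, b.1.2) ∈ Δ)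

/-- The block `A_τ` of all arcs of `G` with initial vertex `τ`. -/
def ABlock {V : Type*} (G : SimpleGraph V) (τ : V) : Set (ArcT G) :=
  {a | a.1.1 = τ}

/-- `x ∈ X` maps the arc `a` to the arc `b`. -/
def ArcMaps (X : Type*) {V : Type*} [Group X] [MulAction X V] (G : SimpleGraph V)
    (x : X) (a b : ArcT G) : Prop :=
  b.1 = x • a.1

/-!
Since `ℓ₁(Δ) = 3 = |Σ(σ) ∖ {τ}|`, the stabiliser of a 2-arc `(τ₁, τ, σ)` is transitive on its
three extensions; with 2-arc-transitivity, `Δ` is the set of all 3-arcs and `X` is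
3-arc-transitive. Then a 2-path `[a, b, c]` is `ℷ`-adjacent exactly to the `[b, m, d]` with
`m ∈ {a, c}` and `d ∈ Σ(m) ∖ {b}` (six of them), and an arc `(τ, τ₁)` is `Ξ`-adjacent exactly to
the `(σ, σ₁)` with `σ ∈ Σ(τ) ∖ {τ₁}` and `σ₁ ∈ Σ(σ) ∖ {τ}` (nine). Connectivity lifts along walks
of `Σ`, the 2-paths with a common middle vertex (arcs with a common tail) being linked through a
neighbouring block; symmetry comes from 2- and 3-arc-transitivity. Finally `X` preserves these
blocks, while a 2-arc of `ℷ` or `Ξ` may or may not return to the block it started from, so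
neither graph is `(X, 2)`-arc-transitive.
-/

theorem Set.ncard_biUnion_singleton_prod {α β : Type*} {s : Set α} (hs : s.Finite)
    {t : α → Set β} {n : ℕ} (ht : ∀ a ∈ s, (t a).Finite) (htn : ∀ a ∈ s, (t a).ncard = n) :
    (⋃ a ∈ s, {a} ×ˢ t a).ncard = s.ncard * n := by
  have hdisj : s.PairwiseDisjoint fun a => ({a} ×ˢ t a : Set (α × β)) := by
    intro a _ b _ hab
    exact Set.disjoint_left.mpr fun p hpa hpb => hab (hpa.1.symm.trans hpb.1)
  rw [hs.ncard_biUnion (fun a ha => (Set.finite_singleton a).prod (ht a ha)) hdisj,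
    finsum_mem_congr rfl fun a ha => by rw [Set.ncard_prod, Set.ncard_singleton, one_mul, htn a ha],
    finsum_mem_eq_finite_toFinset_sum _ hs, Finset.sum_const, smul_eq_mul,
    Set.ncard_eq_toFinset_card s hs]

namespace Regular

variable {V : Type*} {G : SimpleGraph V} {k : ℕ}

theorem finite_neighborSet (hreg : Regular G (k + 1)) (v : V) : (G.neighborSet v).Finite :=
  Set.finite_of_ncard_ne_zero (by rw [hreg v]; omega)

theorem ncard_neighborSet_diff_singleton (hreg : Regular G (k + 1)) {u w : V} (h : G.Adj u w) :
    (G.neighborSet u \ {w}).ncard = k := by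
  rw [Set.ncard_sdiff_singleton_of_mem (s := G.neighborSet u) h, hreg u, Nat.add_sub_cancel]

theorem exists_adj_ne (hreg : Regular G (k + 1)) (hk : 1 ≤ k) (u a : V) :
    ∃ y, G.Adj u y ∧ y ≠ a :=
  Set.exists_mem_notMem_of_ncard_lt_ncard (s := {a}) (t := G.neighborSet u)
    (by rw [Set.ncard_singleton, hreg u]; omega)

theorem exists_adj_ne_ne (hreg : Regular G (k + 1)) (hk : 2 ≤ k) (u a b : V) :
    ∃ y, G.Adj u y ∧ y ≠ a ∧ y ≠ b := by
  have hab : ({a, b} : Set V).ncard ≤ 2 := (Set.ncard_insert_le a {b}).trans (by simp)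
  obtain ⟨y, hy, hyab⟩ := Set.exists_mem_notMem_of_ncard_lt_ncard (s := {a, b})
    (t := G.neighborSet u) (by rw [hreg u]; omega)
  simp only [Set.mem_insert_iff, Set.mem_singleton_iff, not_or] at hyab
  exact ⟨y, hy, hyab⟩

end Regular

theorem SimpleGraph.Preconnected.of_lift_adj {V W : Type*} {G : SimpleGraph V}
    {H : SimpleGraph W} (hG : G.Preconnected) (f : W → V)
    (hfiber : ∀ w w', f w = f w' → H.Reachable w w')
    (hlift : ∀ w v, G.Adj (f w) v → ∃ w', f w' = v ∧ H.Reachable w w') :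
    H.Preconnected := by
  intro w w'
  suffices ∀ u v (p : G.Walk u v) w, f w = u → f w' = v → H.Reachable w w' from
    this _ _ (hG _ _).some w rfl rfl
  intro u v p
  induction p with
  | nil => exact fun w hw hw' => hfiber w w' (hw.trans hw'.symm)
  | cons h p ih =>
    intro w hw hw'
    obtain ⟨w₁, hw₁, hww₁⟩ := hlift w _ (hw ▸ h)
    exact hww₁.trans (ih w₁ hw₁ hw')

section Arc3

variable {V X : Type*} [Group X] [MulAction X V] {G : SimpleGraph V}

def arc3Set (G : SimpleGraph V) : Set (V × V × V × V) := {t | IsArc3 G t}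

theorem IsArc3.smul (hAP : AdjPres X G) (x : X) {t : V × V × V × V} (h : IsArc3 G t) :
    IsArc3 G (x • t) :=
  ⟨hAP x _ _ h.1, hAP x _ _ h.2.1, hAP x _ _ h.2.2.1,
    (MulAction.injective x).ne h.2.2.2.1, (MulAction.injective x).ne h.2.2.2.2⟩

theorem IsArc3.rev {t : V × V × V × V} (h : IsArc3 G t) : IsArc3 G (rev3 t) :=
  ⟨h.2.2.1.symm, h.2.1.symm, h.1.symm, h.2.2.2.2.symm, h.2.2.2.1.symm⟩

theorem orbit_eq_arc3Set (hAP : AdjPres X G) (h2 : Arc2Trans X G) {k : ℕ}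
    (hreg : Regular G (k + 1)) {t₀ : V × V × V × V} (ht₀ : IsArc3 G t₀)
    (hℓ : Ell1Eq X (MulAction.orbit X t₀) k) : MulAction.orbit X t₀ = arc3Set G := by
  refine Set.Subset.antisymm (fun t ⟨x, hx⟩ => hx ▸ ht₀.smul hAP x) ?_
  rintro ⟨a, b, c, d⟩ ⟨hab, hbc, hcd, hac, hbd⟩
  obtain ⟨x, hx⟩ := h2 (t₀.1, t₀.2.1, t₀.2.2.1) (a, b, c) ⟨ht₀.1, ht₀.2.1, ht₀.2.2.2.1⟩
    ⟨hab, hbc, hac⟩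
  have hxt₀ : x • t₀ = (a, b, c, x • t₀.2.2.2) := by
    simp only [Prod.smul_mk, Prod.mk.injEq] at hx
    simp only [Prod.smul_def, hx]
  have hmem : (a, b, c, x • t₀.2.2.2) ∈ MulAction.orbit X t₀ := hxt₀ ▸ MulAction.mem_orbit t₀ x
  -- this set has `k` points, hence is all of the `k`-set `G.neighborSet c \ {b}`
  have hsub : {u : V | ∃ y : X, y • a = a ∧ y • b = b ∧ y • c = c ∧ y • x • t₀.2.2.2 = u} ⊆
      G.neighborSet c \ {b} := by
    rintro u ⟨y, -, hyb, hyc, rfl⟩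
    have harc := (ht₀.smul hAP x).smul hAP y
    rw [hxt₀] at harc
    exact ⟨hyc ▸ harc.2.2.1, fun h => harc.2.2.2.2 (hyb.trans h.symm)⟩
  have hfull := Set.eq_of_subset_of_ncard_le hsub
    (by rw [hℓ _ hmem, hreg.ncard_neighborSet_diff_singleton hbc.symm])
    (hreg.finite_neighborSet c).sdiff
  obtain ⟨y, hya, hyb, hyc, hyd⟩ := hfull.symm.subset ⟨hcd, hbd.symm⟩
  exact ⟨y * x, by simp only [mul_smul, hxt₀, Prod.smul_mk, hya, hyb, hyc, hyd]⟩

theorem arc3Trans_of_orbit_eq {t₀ : V × V × V × V} (h : MulAction.orbit X t₀ = arc3Set G) :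
    Arc3Trans X G := by
  intro s t hs ht
  have hs' : s ∈ MulAction.orbit X t₀ := h ▸ hs
  have ht' : t ∈ MulAction.orbit X t₀ := h ▸ ht
  rwa [← MulAction.orbit_eq_iff.mpr hs'] at ht'

end Arc3

section TwoPaths

variable {V : Type*} {G : SimpleGraph V}

theorem P2.mk_p2rev (p : Path2 G) : P2.mk G (p2rev G p) = P2.mk G p :=
  (Quot.sound (r := fun p q : Path2 G => q = p2rev G p) rfl).symm

def P2.mid : P2 G → V :=
  Quot.lift (fun p => p.1.2.1) fun _ _ h => h ▸ rfl

def P2.ends : P2 G → Sym2 V :=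
  Quot.lift (fun p => s(p.1.1, p.1.2.2)) fun _ _ h => h ▸ Sym2.eq_swap

def P2.of {a b c : V} (hab : G.Adj a b) (hbc : G.Adj b c) (hac : a ≠ c) : P2 G :=
  P2.mk G ⟨(a, b, c), hab, hbc, hac⟩

@[simp] theorem P2.mid_mk (p : Path2 G) : (P2.mk G p).mid = p.1.2.1 := rfl

@[simp] theorem P2.ends_mk (p : Path2 G) : (P2.mk G p).ends = s(p.1.1, p.1.2.2) := rfl

@[simp] theorem P2.mid_of {a b c : V} (hab : G.Adj a b) (hbc : G.Adj b c) (hac : a ≠ c) :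
    (P2.of hab hbc hac).mid = b := rfl

@[simp] theorem P2.ends_of {a b c : V} (hab : G.Adj a b) (hbc : G.Adj b c) (hac : a ≠ c) :
    (P2.of hab hbc hac).ends = s(a, c) := rfl

theorem P2.of_comm {a b c : V} (hab : G.Adj a b) (hbc : G.Adj b c) (hac : a ≠ c) :
    P2.of hab hbc hac = P2.of hbc.symm hab.symm hac.symm :=
  (P2.mk_p2rev _).symm

theorem P2.ind {motive : P2 G → Prop}
    (h : ∀ a b c (hab : G.Adj a b) (hbc : G.Adj b c) (hac : a ≠ c), motive (P2.of hab hbc hac))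
    (z : P2 G) : motive z :=
  Quot.ind (fun ⟨(a, b, c), hab, hbc, hac⟩ => h a b c hab hbc hac) z

theorem P2.ext {z w : P2 G} (hmid : z.mid = w.mid) (hends : z.ends = w.ends) : z = w := by
  induction z using P2.ind with | h a b c hab hbc hac => ?_
  induction w using P2.ind with | h a' b' c' hab' hbc' hac' => ?_
  simp only [P2.mid_of, P2.ends_of, Sym2.eq_iff] at hmid hends
  subst hmid
  obtain ⟨rfl, rfl⟩ | ⟨rfl, rfl⟩ := hends
  · rfl
  · exact (P2.mk_p2rev _).symm

theorem P2.adj_mid_of_mem_ends {z : P2 G} {u : V} (hu : u ∈ z.ends) : G.Adj z.mid u := by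
  induction z using P2.ind with | h a b c hab hbc hac => ?_
  obtain rfl | rfl := Sym2.mem_iff.mp hu
  exacts [hab.symm, hbc]

theorem P2.not_isDiag_ends (z : P2 G) : ¬ z.ends.IsDiag := by
  induction z using P2.ind with | h a b c hab hbc hac => exact Sym2.mk_isDiag_iff.not.mpr hac

end TwoPaths

section Gimel

variable {V X : Type*} [Group X] [MulAction X V] {G : SimpleGraph V} {k : ℕ}

theorem gimel_arc3Set_adj_of {a b c d : V} (h : IsArc3 G (a, b, c, d)) :
    (gimel G (arc3Set G)).Adj (P2.of h.1 h.2.1 h.2.2.2.1) (P2.of h.2.1 h.2.2.1 h.2.2.2.2) := by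
  refine (SimpleGraph.fromRel_adj _ _ _).mpr
    ⟨fun he => h.2.1.ne ?_, Or.inl ⟨_, _, rfl, rfl, rfl, rfl, h⟩⟩
  simpa using congrArg P2.mid he

theorem gimel_arc3Set_adj_exists {z w : P2 G} (h : (gimel G (arc3Set G)).Adj z w) :
    ∃ a b c d, ∃ h : IsArc3 G (a, b, c, d),
      z = P2.of h.1 h.2.1 h.2.2.2.1 ∧ w = P2.of h.2.1 h.2.2.1 h.2.2.2.2 := by
  obtain ⟨-, ⟨⟨⟨a, b, c⟩, _⟩, ⟨⟨b, c, d⟩, _⟩, rfl, rfl, rfl, rfl, h⟩ |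
      ⟨⟨⟨d, c, b⟩, _⟩, ⟨⟨c, b, a⟩, _⟩, rfl, rfl, rfl, rfl, h⟩⟩ :=
    (SimpleGraph.fromRel_adj _ _ _).mp h
  · exact ⟨a, b, c, d, h, rfl, rfl⟩
  · have h' : IsArc3 G (a, b, c, d) := IsArc3.rev h
    exact ⟨a, b, c, d, h', (P2.of_comm h'.1 h'.2.1 h'.2.2.2.1).symm,
      (P2.of_comm h'.2.1 h'.2.2.1 h'.2.2.2.2).symm⟩

theorem gimel_arc3Set_adj {z w : P2 G} :
    (gimel G (arc3Set G)).Adj z w ↔ z.mid ∈ w.ends ∧ w.mid ∈ z.ends := by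
  constructor
  · intro h
    obtain ⟨a, b, c, d, h, rfl, rfl⟩ := gimel_arc3Set_adj_exists h
    simp
  · induction z using P2.ind with | h a b c hab hbc hac => ?_
    induction w using P2.ind with | h a' b' c' hab' hbc' hac' => ?_
    simp only [P2.mid_of, P2.ends_of, Sym2.mem_iff]
    rintro ⟨rfl | rfl, rfl | rfl⟩
    · rw [P2.of_comm hab]
      exact gimel_arc3Set_adj_of ⟨hbc.symm, hab.symm, hbc', hac.symm, hac'⟩
    · exact gimel_arc3Set_adj_of ⟨hab, hbc, hbc', hac, hac'⟩
    · rw [P2.of_comm hab, P2.of_comm hab']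
      exact gimel_arc3Set_adj_of ⟨hbc.symm, hab.symm, hab'.symm, hac.symm, hac'.symm⟩
    · rw [P2.of_comm hab']
      exact gimel_arc3Set_adj_of ⟨hab, hbc, hab'.symm, hac, hac'.symm⟩

theorem gimel_arc3Set_regular (hreg : Regular G (k + 1)) :
    Regular (gimel G (arc3Set G)) (2 * k) := by
  intro z
  induction z using P2.ind with | h a b c hab hbc hac => ?_
  have hinj : Function.Injective fun w : P2 G => (w.mid, w.ends) :=
    fun z w h => P2.ext (congrArg Prod.fst h) (congrArg Prod.snd h)
  have hadj : ∀ m ∈ ({a, c} : Set V), G.Adj b m := by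
    rintro m (rfl | rfl)
    exacts [hab.symm, hbc]
  have himage : (fun w : P2 G => (w.mid, w.ends)) ''
      (gimel G (arc3Set G)).neighborSet (P2.of hab hbc hac) =
      ⋃ m ∈ ({a, c} : Set V), {m} ×ˢ ((fun d => s(b, d)) '' (G.neighborSet m \ {b})) := by
    ext ⟨m, e⟩
    simp only [Set.mem_image, SimpleGraph.mem_neighborSet, gimel_arc3Set_adj, P2.mid_of,
      P2.ends_of, Set.mem_iUnion, Set.mem_prod, Set.mem_singleton_iff, Set.mem_insert_iff,
      Set.mem_sdiff, Prod.mk.injEq, exists_prop]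
    constructor
    · rintro ⟨w, ⟨hb, hm⟩, rfl, rfl⟩
      refine ⟨w.mid, Sym2.mem_iff.mp hm, rfl, Sym2.Mem.other hb, ⟨?_, ?_⟩, Sym2.other_spec hb⟩
      · exact P2.adj_mid_of_mem_ends (Sym2.other_mem hb)
      · exact Sym2.other_ne w.not_isDiag_ends hb
    · rintro ⟨m, hm, rfl, d, ⟨hmd, hdb⟩, rfl⟩
      exact ⟨P2.of (hadj m hm) hmd (Ne.symm hdb), ⟨by simp, by simpa using hm⟩, rfl, rfl⟩
  have hfin := hreg.finite_neighborSet
  rw [← Set.ncard_image_of_injective _ hinj, himage,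
    Set.ncard_biUnion_singleton_prod (Set.toFinite _) (fun m _ => (hfin m).sdiff.image _)
      (fun m hm => by rw [Set.ncard_image_of_injective _ fun _ _ => Sym2.congr_right.mp,
        hreg.ncard_neighborSet_diff_singleton (hadj m hm).symm]), Set.ncard_pair hac]

theorem gimel_arc3Set_reachable_of_mid_eq_of_mem_ends (hreg : Regular G (k + 1)) (hk : 1 ≤ k)
    {z w : P2 G} (hmid : z.mid = w.mid) {u : V} (hz : u ∈ z.ends) (hw : u ∈ w.ends) :
    (gimel G (arc3Set G)).Reachable z w := by
  have hbu : G.Adj z.mid u := P2.adj_mid_of_mem_ends hz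
  obtain ⟨y, huy, hyb⟩ := hreg.exists_adj_ne hk u z.mid
  -- `[z.mid, u, y]` is adjacent to every 2-path with middle `z.mid` and end `u`
  let m := P2.of hbu huy hyb.symm
  have hzm : (gimel G (arc3Set G)).Adj z m := gimel_arc3Set_adj.mpr ⟨by simp [m], by simpa [m]⟩
  have hmw : (gimel G (arc3Set G)).Adj m w :=
    gimel_arc3Set_adj.mpr ⟨by simpa [m], by simp [m, hmid]⟩
  exact hzm.reachable.trans hmw.reachable

theorem gimel_arc3Set_reachable_of_mid_eq (hreg : Regular G (k + 1)) (hk : 1 ≤ k)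
    {z w : P2 G} (hmid : z.mid = w.mid) : (gimel G (arc3Set G)).Reachable z w := by
  induction z using P2.ind with | h a b c hab hbc hac => ?_
  induction w using P2.ind with | h a' b' c' hab' hbc' hac' => ?_
  simp only [P2.mid_of] at hmid
  subst hmid
  by_cases hca : c' = a
  · subst hca
    exact gimel_arc3Set_reachable_of_mid_eq_of_mem_ends hreg hk rfl
      (Sym2.mem_mk_left _ _) (Sym2.mem_mk_right _ _)
  · let m := P2.of hab hbc' (Ne.symm hca)
    exact (gimel_arc3Set_reachable_of_mid_eq_of_mem_ends hreg hk (z := P2.of hab hbc hac) (w := m)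
      rfl (Sym2.mem_mk_left _ _) (Sym2.mem_mk_left _ _)).trans
      (gimel_arc3Set_reachable_of_mid_eq_of_mem_ends hreg hk rfl
      (Sym2.mem_mk_right _ _) (Sym2.mem_mk_right _ _))

theorem gimel_arc3Set_connected (hreg : Regular G (k + 1)) (hk : 1 ≤ k) (hconn : G.Connected) :
    (gimel G (arc3Set G)).Connected := by
  obtain ⟨v⟩ := hconn.nonempty
  obtain ⟨u, hvu, -⟩ := hreg.exists_adj_ne hk v v
  obtain ⟨y, huy, hyv⟩ := hreg.exists_adj_ne hk u v
  have hne : Nonempty (P2 G) := ⟨P2.of hvu huy hyv.symm⟩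
  refine (SimpleGraph.connected_iff _).mpr ⟨hconn.preconnected.of_lift_adj P2.mid
    (fun _ _ => gimel_arc3Set_reachable_of_mid_eq hreg hk) fun z v hv => ?_, hne⟩
  obtain ⟨u, hzu, huv⟩ := hreg.exists_adj_ne hk z.mid v
  obtain ⟨y, hvy, hyz⟩ := hreg.exists_adj_ne hk v z.mid
  refine ⟨P2.of hv hvy hyz.symm, rfl, ?_⟩
  let m := P2.of hzu.symm hv huv
  have hmw : (gimel G (arc3Set G)).Adj m (P2.of hv hvy hyz.symm) :=
    gimel_arc3Set_adj.mpr ⟨by simp [m], by simp [m]⟩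
  exact (gimel_arc3Set_reachable_of_mid_eq hreg hk (z := z) (w := m) rfl).trans hmw.reachable

theorem P2Maps.mid_eq {x : X} {z w : P2 G} (h : P2Maps X G x z w) : w.mid = x • z.mid := by
  obtain ⟨p, q, rfl, rfl, hq | hq⟩ := h <;> simp [hq, p2rev]

theorem P2Maps.ends_eq {x : X} {z w : P2 G} (h : P2Maps X G x z w) :
    w.ends = z.ends.map (x • ·) := by
  obtain ⟨p, q, rfl, rfl, hq | hq⟩ := h <;> simp [hq, p2rev, Sym2.eq_swap]

theorem gimel_arc3Set_relXSymm (h2 : Arc2Trans X G) (h3 : Arc3Trans X G) :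
    RelXSymm X (P2Maps X G) (gimel G (arc3Set G)) := by
  refine ⟨fun x z w z' w' h hz hw => ?_, fun z w => ?_, fun z₁ z₂ w₁ w₂ h h' => ?_⟩
  · rw [gimel_arc3Set_adj] at h ⊢
    rw [hz.mid_eq, hw.mid_eq, hz.ends_eq, hw.ends_eq]
    exact ⟨Sym2.mem_map.mpr ⟨_, h.1, rfl⟩, Sym2.mem_map.mpr ⟨_, h.2, rfl⟩⟩
  · induction z using P2.ind with | h a b c hab hbc hac => ?_
    induction w using P2.ind with | h a' b' c' hab' hbc' hac' => ?_
    obtain ⟨x, hx⟩ := h2 (a, b, c) (a', b', c') ⟨hab, hbc, hac⟩ ⟨hab', hbc', hac'⟩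
    exact ⟨x, _, _, rfl, rfl, Or.inl hx.symm⟩
  · obtain ⟨a, b, c, d, ht, rfl, rfl⟩ := gimel_arc3Set_adj_exists h
    obtain ⟨a', b', c', d', ht', rfl, rfl⟩ := gimel_arc3Set_adj_exists h'
    obtain ⟨x, hx⟩ := h3 _ _ ht ht'
    simp only [Prod.smul_mk, Prod.mk.injEq] at hx
    obtain ⟨rfl, rfl, rfl, rfl⟩ := hx
    exact ⟨x, ⟨_, _, rfl, rfl, Or.inl rfl⟩, ⟨_, _, rfl, rfl, Or.inl rfl⟩⟩

theorem gimel_arc3Set_not_relArc2Trans (hreg : Regular G (k + 1)) (hk : 2 ≤ k)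
    {τ₁ τ σ σ₁ : V} (ht : IsArc3 G (τ₁, τ, σ, σ₁)) :
    ¬ RelArc2Trans X (P2Maps X G) (gimel G (arc3Set G)) := by
  intro h2
  obtain ⟨hτ₁τ, hτσ, hσσ₁, hτ₁σ, hτσ₁⟩ := ht
  obtain ⟨y, hτy, hyσ, hyτ₁⟩ := hreg.exists_adj_ne_ne hk τ σ τ₁
  obtain ⟨u, hσ₁u, huσ⟩ := hreg.exists_adj_ne (by omega) σ₁ σ
  let z₁ := P2.of hτ₁τ hτσ hτ₁σ
  let z₂ := P2.of hτσ hσσ₁ hτσ₁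
  let z₃ := P2.of hτσ.symm hτy hyσ.symm
  let z₃' := P2.of hσσ₁ hσ₁u huσ.symm
  have h₁₂ : (gimel G (arc3Set G)).Adj z₁ z₂ :=
    gimel_arc3Set_adj.mpr ⟨by simp [z₁, z₂], by simp [z₁, z₂]⟩
  have h₂₃ : (gimel G (arc3Set G)).Adj z₂ z₃ :=
    gimel_arc3Set_adj.mpr ⟨by simp [z₂, z₃], by simp [z₂, z₃]⟩
  have h₂₃' : (gimel G (arc3Set G)).Adj z₂ z₃' :=
    gimel_arc3Set_adj.mpr ⟨by simp [z₂, z₃'], by simp [z₂, z₃']⟩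
  have h₁₃ : z₁ ≠ z₃ := fun h => by
    have := congrArg P2.ends h
    simp only [z₁, z₃, P2.ends_of, Sym2.eq_iff] at this
    tauto
  have h₁₃' : z₁ ≠ z₃' := fun h => hτσ₁ (congrArg P2.mid h)
  obtain ⟨x, hx₁, -, hx₃⟩ := h2 _ _ _ _ _ _ h₁₂ h₂₃ h₁₃ h₁₂ h₂₃' h₁₃'
  have hxτ : τ = x • τ := hx₁.mid_eq
  have hxτ' : σ₁ = x • τ := hx₃.mid_eq
  exact hτσ₁ (hxτ.trans hxτ'.symm)

end Gimel

section Xi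

variable {V X : Type*} [Group X] [MulAction X V] {G : SimpleGraph V} {k : ℕ}

theorem xi_arc3Set_adj {a b : ArcT G} :
    (Xi G (arc3Set G)).Adj a b ↔ IsArc3 G (a.1.2, a.1.1, b.1.1, b.1.2) := by
  refine ⟨fun h => ?_, fun h => (SimpleGraph.fromRel_adj _ _ _).mpr
    ⟨fun hab => h.2.1.ne (congrArg (·.1.1) hab), Or.inl h⟩⟩
  obtain ⟨-, h | h⟩ := (SimpleGraph.fromRel_adj _ _ _).mp h
  exacts [h, IsArc3.rev h]

theorem xi_arc3Set_regular (hreg : Regular G (k + 1)) : Regular (Xi G (arc3Set G)) (k * k) := by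
  intro a
  have himage : (fun b : ArcT G => b.1) '' (Xi G (arc3Set G)).neighborSet a =
      ⋃ σ ∈ G.neighborSet a.1.1 \ {a.1.2}, {σ} ×ˢ (G.neighborSet σ \ {a.1.1}) := by
    ext c
    simp only [Set.mem_image, SimpleGraph.mem_neighborSet, xi_arc3Set_adj, Set.mem_iUnion,
      Set.mem_prod, Set.mem_singleton_iff, Set.mem_sdiff, exists_prop]
    constructor
    · rintro ⟨b, ⟨-, hab, hb, hab', hab''⟩, rfl⟩
      exact ⟨b.1.1, ⟨hab, Ne.symm hab'⟩, rfl, hb, Ne.symm hab''⟩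
    · rintro ⟨σ, ⟨haσ, hσa⟩, hcσ, hc, hca⟩
      subst hcσ
      exact ⟨⟨c, hc⟩, ⟨a.2.symm, haσ, hc, Ne.symm hσa, Ne.symm hca⟩, rfl⟩
  rw [← Set.ncard_image_of_injective _ (f := fun b : ArcT G => b.1) fun _ _ => Subtype.ext, himage,
    Set.ncard_biUnion_singleton_prod (hreg.finite_neighborSet _).sdiff
      (fun σ _ => (hreg.finite_neighborSet σ).sdiff)
      (fun σ hσ => hreg.ncard_neighborSet_diff_singleton hσ.1.symm),
    hreg.ncard_neighborSet_diff_singleton a.2]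

theorem xi_arc3Set_reachable_of_fst_eq (hreg : Regular G (k + 1)) (hk : 2 ≤ k) {a b : ArcT G}
    (h : a.1.1 = b.1.1) : (Xi G (arc3Set G)).Reachable a b := by
  obtain ⟨σ, hτσ, hστ₁, hστ₂⟩ := hreg.exists_adj_ne_ne hk a.1.1 a.1.2 b.1.2
  obtain ⟨σ₁, hσσ₁, hσ₁τ⟩ := hreg.exists_adj_ne (by omega) σ a.1.1
  let c : ArcT G := ⟨(σ, σ₁), hσσ₁⟩
  have hac : (Xi G (arc3Set G)).Adj a c :=
    xi_arc3Set_adj.mpr ⟨a.2.symm, hτσ, hσσ₁, hστ₁.symm, hσ₁τ.symm⟩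
  have hcb : (Xi G (arc3Set G)).Adj c b :=
    xi_arc3Set_adj.mpr ⟨hσσ₁.symm, h ▸ hτσ.symm, b.2, h ▸ hσ₁τ, hστ₂⟩
  exact hac.reachable.trans hcb.reachable

theorem xi_arc3Set_connected (hreg : Regular G (k + 1)) (hk : 2 ≤ k) (hconn : G.Connected) :
    (Xi G (arc3Set G)).Connected := by
  obtain ⟨v⟩ := hconn.nonempty
  obtain ⟨u, hvu, -⟩ := hreg.exists_adj_ne (by omega) v v
  refine (SimpleGraph.connected_iff _).mpr ⟨hconn.preconnected.of_lift_adj (fun a => a.1.1)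
    (fun _ _ => xi_arc3Set_reachable_of_fst_eq hreg hk) fun a σ hσ => ?_, ⟨⟨(v, u), hvu⟩⟩⟩
  obtain ⟨τ', hττ', hτ'σ⟩ := hreg.exists_adj_ne (by omega) a.1.1 σ
  obtain ⟨σ₁, hσσ₁, hσ₁τ⟩ := hreg.exists_adj_ne (by omega) σ a.1.1
  let b : ArcT G := ⟨(a.1.1, τ'), hττ'⟩
  have hb : (Xi G (arc3Set G)).Adj b ⟨(σ, σ₁), hσσ₁⟩ :=
    xi_arc3Set_adj.mpr ⟨hττ'.symm, hσ, hσσ₁, hτ'σ, hσ₁τ.symm⟩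
  exact ⟨_, rfl, (xi_arc3Set_reachable_of_fst_eq hreg hk (a := a) (b := b) rfl).trans hb.reachable⟩

theorem xi_arc3Set_relXSymm (hAP : AdjPres X G) (h1 : ArcTrans X G) (h3 : Arc3Trans X G) :
    RelXSymm X (ArcMaps X G) (Xi G (arc3Set G)) := by
  refine ⟨fun x a b a' b' h ha hb => ?_, fun a b => ?_, fun a₁ a₂ b₁ b₂ h h' => ?_⟩
  · rw [xi_arc3Set_adj] at h ⊢
    rw [ha, hb]
    exact h.smul hAP x
  · obtain ⟨x, hx⟩ := h1 a.1 b.1 a.2 b.2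
    exact ⟨x, hx.symm⟩
  · rw [xi_arc3Set_adj] at h h'
    obtain ⟨x, hx⟩ := h3 _ _ h h'
    simp only [Prod.smul_mk, Prod.mk.injEq] at hx
    obtain ⟨h₁, h₂, h₃, h₄⟩ := hx
    exact ⟨x, Prod.ext h₂.symm h₁.symm, Prod.ext h₃.symm h₄.symm⟩

theorem xi_arc3Set_not_relArc2Trans (hreg : Regular G (k + 1)) (hk : 2 ≤ k)
    {τ₁ τ σ σ₁ : V} (ht : IsArc3 G (τ₁, τ, σ, σ₁)) :
    ¬ RelArc2Trans X (ArcMaps X G) (Xi G (arc3Set G)) := by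
  intro h2
  obtain ⟨hτ₁τ, hτσ, hσσ₁, hτ₁σ, hτσ₁⟩ := ht
  obtain ⟨δ₁, hτδ₁, hδ₁σ, hδ₁τ₁⟩ := hreg.exists_adj_ne_ne hk τ σ τ₁
  obtain ⟨δ, hσδ, hδσ₁, hδτ⟩ := hreg.exists_adj_ne_ne hk σ σ₁ τ
  obtain ⟨δ', hδδ', hδ'σ⟩ := hreg.exists_adj_ne (by omega) δ σ
  let a₁ : ArcT G := ⟨(τ, τ₁), hτ₁τ.symm⟩
  let a₂ : ArcT G := ⟨(σ, σ₁), hσσ₁⟩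
  have h₁₂ : (Xi G (arc3Set G)).Adj a₁ a₂ :=
    xi_arc3Set_adj.mpr ⟨hτ₁τ, hτσ, hσσ₁, hτ₁σ, hτσ₁⟩
  have h₂₃ : (Xi G (arc3Set G)).Adj a₂ ⟨(τ, δ₁), hτδ₁⟩ :=
    xi_arc3Set_adj.mpr ⟨hσσ₁.symm, hτσ.symm, hτδ₁, hτσ₁.symm, hδ₁σ.symm⟩
  have h₂₃' : (Xi G (arc3Set G)).Adj a₂ ⟨(δ, δ'), hδδ'⟩ :=
    xi_arc3Set_adj.mpr ⟨hσσ₁.symm, hσδ, hδδ', hδσ₁.symm, hδ'σ.symm⟩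
  obtain ⟨x, hx₁, -, hx₃⟩ := h2 _ _ _ _ _ _ h₁₂ h₂₃
    (fun h => hδ₁τ₁ (congrArg (·.1.2) h).symm) h₁₂ h₂₃' (fun h => hδτ (congrArg (·.1.1) h).symm)
  have hxτ : τ = x • τ := congrArg Prod.fst hx₁
  have hxτ' : δ = x • τ := congrArg Prod.fst hx₃
  exact hδτ (hxτ'.trans hxτ.symm)

end Xi

theorem tetravalent_ell1_three_general {V X : Type*} [Group X] [MulAction X V]
    (G : SimpleGraph V) (hreg : Regular G 4) (hconn : G.Connected)
    (h2at : Arc2TransGraph X G)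
    (Δ : Set (V × V × V × V)) (hΔ : SelfPairedOrbit3 X G Δ) (hℓ : Ell1Eq X Δ 3) :
    Regular (gimel G Δ) 6 ∧ Regular (Xi G Δ) 9 ∧
    (gimel G Δ).Connected ∧ (Xi G Δ).Connected ∧
    RelXSymm X (P2Maps X G) (gimel G Δ) ∧
    ¬ RelArc2Trans X (P2Maps X G) (gimel G Δ) ∧
    RelXSymm X (ArcMaps X G) (Xi G Δ) ∧
    ¬ RelArc2Trans X (ArcMaps X G) (Xi G Δ) ∧
    Arc3Trans X G := by
  obtain ⟨⟨hAP, -, hAT⟩, h2T⟩ := h2at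
  obtain ⟨hΔarc, ⟨t₀, ht₀, rfl⟩, -⟩ := hΔ
  have ht₀ : IsArc3 G t₀ := hΔarc t₀ ht₀
  have hΔ : MulAction.orbit X t₀ = arc3Set G := orbit_eq_arc3Set hAP h2T hreg ht₀ hℓ
  have h3T : Arc3Trans X G := arc3Trans_of_orbit_eq hΔ
  rw [hΔ]
  exact ⟨gimel_arc3Set_regular hreg, xi_arc3Set_regular hreg,
    gimel_arc3Set_connected hreg (by norm_num) hconn, xi_arc3Set_connected hreg (by norm_num) hconn,
    gimel_arc3Set_relXSymm h2T h3T, gimel_arc3Set_not_relArc2Trans hreg (by norm_num) ht₀,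
    xi_arc3Set_relXSymm hAP hAT h3T, xi_arc3Set_not_relArc2Trans hreg (by norm_num) ht₀, h3T⟩

/-- The case `ℓ₁(Δ) = 3` for a connected `(X,2)`-arc-transitive
tetravalent graph `G` with `X` faithful on vertices:  `ℷ(G,Δ)` has valency 6, `Ξ(G,Δ)`
has valency 9, both are connected and `(X,1)`-transitive, and `G` is
`(X,3)`-arc-transitive. -/
theorem tetravalent_ell1_three {V X : Type*} [Fintype V] [Group X] [MulAction X V]
    (G : SimpleGraph V) (hreg : Regular G 4) (hconn : G.Connected)
    (h2at : Arc2TransGraph X G)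
    (hfaith : ∀ x : X, (∀ u : V, x • u = u) → x = 1)
    (Δ : Set (V × V × V × V)) (hΔ : SelfPairedOrbit3 X G Δ) (hℓ : Ell1Eq X Δ 3) :
    Regular (gimel G Δ) 6 ∧ Regular (Xi G Δ) 9 ∧
    (gimel G Δ).Connected ∧ (Xi G Δ).Connected ∧
    RelXSymm X (P2Maps X G) (gimel G Δ) ∧
    ¬ RelArc2Trans X (P2Maps X G) (gimel G Δ) ∧
    RelXSymm X (ArcMaps X G) (Xi G Δ) ∧
    ¬ RelArc2Trans X (ArcMaps X G) (Xi G Δ) ∧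
    Arc3Trans X G :=
  tetravalent_ell1_three_general G hreg hconn h2at Δ hΔ hℓ
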